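/- arXiv:1204.3025 — 2 statements merged into one kernel-verified Lean document; each statement's English description precedes it below -/
import Mathlib

section
/- Let R be an integral domain and (M_r)_{r∈ℕ} a family of finite free R-modules. Let S be a subring of the product ring ∏_r End_R(M_r) which, for every r and every pair of basis indices (α, β) of M_r, contains an element whose r-th component is a nonzero scalar multiple of the elementary endomorphism E_{αβ} (and arbitrary elsewhere). Then every element of the centre of S acts on each M_r as multiplication by a scalar λ_r ∈ R. -/
namespace Module.Basis

variable {ι R M : Type*} [CommSemiring R] [AddCommMonoid M] [Module R M] (b : Basis ι R M)

theorem apply_eq_repr_smul_of_apply_eq_zero {e : Module.End R M} {β : ι}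
    (he : ∀ γ, γ ≠ β → e (b γ) = 0) (x : M) : e x = b.repr x β • e (b β) := by
  have : e = (b.coord β).smulRight (e (b β)) := b.ext fun γ => by
    rcases eq_or_ne γ β with rfl | hγ
    · simp
    · simp [he γ hγ, hγ]
  exact LinearMap.congr_fun this x

/-- An endomorphism commuting with `e = c • E_{αβ}` (`c` regular on `M`)
scales `b α` by the `β`-th diagonal entry of its matrix. -/
theorem apply_eq_repr_smul_of_commute {f e : Module.End R M} {α β : ι} {c : R}
    (hc : IsSMulRegular M c) (hfe : Commute f e) (heβ : e (b β) = c • b α)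
    (he : ∀ γ, γ ≠ β → e (b γ) = 0) : f (b α) = b.repr (f (b β)) β • b α := by
  refine hc ?_
  calc c • f (b α) = f (e (b β)) := by rw [heβ, map_smul]
    _ = e (f (b β)) := LinearMap.congr_fun hfe (b β)
    _ = b.repr (f (b β)) β • c • b α := by rw [b.apply_eq_repr_smul_of_apply_eq_zero he, heβ]
    _ = c • b.repr (f (b β)) β • b α := smul_comm _ _ _

theorem apply_eq_smul_of_apply_basis_eq_smul {f : Module.End R M} {lam : R}
    (hf : ∀ α, f (b α) = lam • b α) (x : M) : f x = lam • x :=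
  LinearMap.congr_fun (b.ext (f₂ := lam • LinearMap.id) hf) x

end Module.Basis

theorem center_acts_by_scalars_general (R : Type*) [CommRing R] [IsDomain R]
    (M : ℕ → Type*) [∀ r, AddCommGroup (M r)] [∀ r, Module R (M r)]
    (ι : ℕ → Type*) (b : ∀ r, Module.Basis (ι r) R (M r))
    (S : Subring (∀ r, Module.End R (M r)))
    (hS : ∀ (r : ℕ) (α β : ι r), ∃ s ∈ S, ∃ c : R, c ≠ 0 ∧
      s r (b r β) = c • b r α ∧ ∀ γ : ι r, γ ≠ β → s r (b r γ) = 0)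
    (z : ∀ r, Module.End R (M r))
    (hcentral : ∀ s ∈ S, z * s = s * z) :
    ∀ r : ℕ, ∃ lam : R, ∀ x : M r, z r x = lam • x := by
  intro r
  have : Module.IsTorsionFree R (M r) := (b r).isTorsionFree
  have hdiag : ∀ α β : ι r, z r (b r α) = (b r).repr (z r (b r β)) β • b r α := by
    intro α β
    obtain ⟨s, hs, c, hc, hsβ, hsγ⟩ := hS r α β
    exact (b r).apply_eq_repr_smul_of_commute (.of_ne_zero hc) (congrFun (hcentral s hs) r)
      hsβ hsγ
  obtain ⟨lam, hlam⟩ : ∃ lam : R, ∀ α, z r (b r α) = lam • b r α := by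
    rcases isEmpty_or_nonempty (ι r) with _ | ⟨⟨β⟩⟩
    · exact ⟨0, isEmptyElim⟩
    · exact ⟨_, fun α => hdiag α β⟩
  exact ⟨lam, (b r).apply_eq_smul_of_apply_basis_eq_smul hlam⟩

/-- Let `R` be an integral domain and `(M r)` a family of finite free
`R`-modules with bases `b r`.  If a subring `S` of `∏ r, End_R (M r)` contains,
for every `r` and all basis indices `α β`, an element whose `r`-th component is
a nonzero scalar multiple of the elementary endomorphism `E_{αβ}`, then every
element of the centre of `S` acts on each `M r` as multiplication by a scalar. -/
theorem center_acts_by_scalars (R : Type*) [CommRing R] [IsDomain R]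
    (M : ℕ → Type*) [∀ r, AddCommGroup (M r)] [∀ r, Module R (M r)]
    (ι : ℕ → Type*) [∀ r, Fintype (ι r)] (b : ∀ r, Module.Basis (ι r) R (M r))
    (S : Subring (∀ r, Module.End R (M r)))
    (hS : ∀ (r : ℕ) (α β : ι r), ∃ s ∈ S, ∃ c : R, c ≠ 0 ∧
      s r (b r β) = c • b r α ∧ ∀ γ : ι r, γ ≠ β → s r (b r γ) = 0)
    (z : ∀ r, Module.End R (M r)) (hz : z ∈ S)
    (hcentral : ∀ s ∈ S, z * s = s * z) :
    ∀ r : ℕ, ∃ lam : R, ∀ x : M r, z r x = lam • x :=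
  center_acts_by_scalars_general R M ι b S hS z hcentral
end

section
/- Let p be a prime and let A = ℤ_(p)[v₁, v₂, ...] and P = A[t₁, t₂, ...] be polynomial rings, graded with |v_i| = |t_i| = 2(p^i − 1). Let η : A → P be a graded ring homomorphism such that for each m, η(v_m) = p·t_m + Σ_γ λ_γ t^γ + (terms in the ideal of P generated by v₁, v₂, ...), where γ ranges over exponent sequences of the correct degree that are strictly smaller than the sequence of v_m in the right lexicographic order. Then for every exponent sequence γ, η(v^γ) = λ·t^γ + Σ_{γ' < γ} λ'_{γ'} t^{γ'} + (terms in the ideal generated by the v_i), for some scalars with λ ≠ 0. -/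
/-- The integers localized at the prime `p`. -/
abbrev Zploc (p : ℕ) (hp : p.Prime) : Type :=
  @Localization.AtPrime ℤ _ (Ideal.span {(p : ℤ)})
    ((Ideal.span_singleton_prime (by exact_mod_cast hp.ne_zero)).mpr
      (Nat.prime_iff_prime_int.mp hp))

/-- Right lexicographic strict order on exponent sequences. -/
def rlex (a b : ℕ →₀ ℕ) : Prop :=
  ∃ j : ℕ, (∀ k : ℕ, j < k → a k = b k) ∧ a j < b j

/-- Weighted degree of an exponent sequence under `|v_{i+1}| = |t_{i+1}| = 2(p^{i+1}-1)`. -/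
def wdeg (p : ℕ) (γ : ℕ →₀ ℕ) : ℕ := γ.sum fun i a => a * (2 * (p ^ (i + 1) - 1))

/-- The monomial `t^γ` in `P = A[t₁, t₂, …]`, with the `v`'s indexed by
`Sum.inl` and the `t`'s by `Sum.inr` (index `i` playing the role of `i+1`). -/
noncomputable def tmon (p : ℕ) (hp : p.Prime) (γ : ℕ →₀ ℕ) :
    MvPolynomial (ℕ ⊕ ℕ) (Zploc p hp) :=
  MvPolynomial.monomial (γ.mapDomain Sum.inr) (1 : Zploc p hp)

/-- The ideal of `P` generated by the `v_i`. -/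
noncomputable def videal (p : ℕ) (hp : p.Prime) :
    Ideal (MvPolynomial (ℕ ⊕ ℕ) (Zploc p hp)) :=
  Ideal.span (Set.range fun i : ℕ =>
    (MvPolynomial.X (Sum.inl i) : MvPolynomial (ℕ ⊕ ℕ) (Zploc p hp)))

/-!
Say that `x` has leading `t`-monomial `t^γ` if `x ≡ l • t^γ` for some `l ≠ 0`, modulo
`rlex`-smaller `t`-monomials and the ideal `(v₁, v₂, …)`. The right lexicographic order is the
colexicographic order on `ℕ →₀ ℕ`, hence compatible with addition, so over a domain this
property is multiplicative in `(γ, x)`. By hypothesis `η(v_m)` has leading `t`-monomial `t_m`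
(with `l = p ≠ 0`), so `η(v^γ) = ∏ η(v_m)^{γ_m}` has leading `t`-monomial `t^γ`.
-/

open MvPolynomial

theorem rlex_iff_toColex_lt {a b : ℕ →₀ ℕ} : rlex a b ↔ toColex a < toColex b := Iff.rfl

theorem rlex_trans {a b c : ℕ →₀ ℕ} (hab : rlex a b) (hbc : rlex b c) : rlex a c :=
  rlex_iff_toColex_lt.2 <| (rlex_iff_toColex_lt.1 hab).trans (rlex_iff_toColex_lt.1 hbc)

theorem rlex_add_left {a b : ℕ →₀ ℕ} (h : rlex a b) (c : ℕ →₀ ℕ) : rlex (c + a) (c + b) := by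
  rw [rlex_iff_toColex_lt, toColex_add, toColex_add]
  exact add_lt_add_right (rlex_iff_toColex_lt.1 h) _

theorem rlex_add_right {a b : ℕ →₀ ℕ} (h : rlex a b) (c : ℕ →₀ ℕ) : rlex (a + c) (b + c) := by
  simpa only [add_comm _ c] using rlex_add_left h c

instance (p : ℕ) (hp : p.Prime) : CharZero (Zploc p hp) :=
  charZero_of_injective_algebraMap (FaithfulSMul.algebraMap_injective ℤ _)

section LeadingTMonomial

variable {R : Type*} [CommSemiring R]

variable (R) in
noncomputable def tMonomial (γ : ℕ →₀ ℕ) : MvPolynomial (ℕ ⊕ ℕ) R :=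
  monomial (γ.mapDomain Sum.inr) 1

@[simp]
theorem tMonomial_zero : tMonomial R 0 = 1 := by
  simp [tMonomial]

theorem tMonomial_add (a b : ℕ →₀ ℕ) :
    tMonomial R (a + b) = tMonomial R a * tMonomial R b := by
  simp [tMonomial, monomial_mul, Finsupp.mapDomain_add]

variable (R) in
noncomputable def rlexLowerSpan (γ : ℕ →₀ ℕ) : Submodule R (MvPolynomial (ℕ ⊕ ℕ) R) :=
  Submodule.span R (tMonomial R '' {δ | rlex δ γ})

theorem tMonomial_mem_rlexLowerSpan {δ γ : ℕ →₀ ℕ} (h : rlex δ γ) :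
    tMonomial R δ ∈ rlexLowerSpan R γ :=
  Submodule.subset_span ⟨δ, h, rfl⟩

theorem rlexLowerSpan_mono {a b : ℕ →₀ ℕ} (h : rlex a b) : rlexLowerSpan R a ≤ rlexLowerSpan R b :=
  Submodule.span_mono (Set.image_mono fun _ hδ => rlex_trans hδ h)

theorem tMonomial_mul_mem_rlexLowerSpan (a : ℕ →₀ ℕ) {b : ℕ →₀ ℕ} {y : MvPolynomial (ℕ ⊕ ℕ) R}
    (hy : y ∈ rlexLowerSpan R b) : tMonomial R a * y ∈ rlexLowerSpan R (a + b) := by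
  induction hy using Submodule.span_induction with
  | mem _ hδ =>
    obtain ⟨δ, hδ, rfl⟩ := hδ
    rw [← tMonomial_add]
    exact tMonomial_mem_rlexLowerSpan (rlex_add_left hδ a)
  | zero => simp
  | add _ _ _ _ hy hz => simpa only [mul_add] using add_mem hy hz
  | smul c _ _ hy => simpa only [mul_smul_comm] using Submodule.smul_mem _ c hy

theorem mul_mem_rlexLowerSpan {a b : ℕ →₀ ℕ} {x y : MvPolynomial (ℕ ⊕ ℕ) R}
    (hx : x ∈ rlexLowerSpan R a) (hy : y ∈ rlexLowerSpan R b) :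
    x * y ∈ rlexLowerSpan R (a + b) := by
  induction hx using Submodule.span_induction with
  | mem _ hδ =>
    obtain ⟨δ, hδ, rfl⟩ := hδ
    exact rlexLowerSpan_mono (rlex_add_right hδ b) (tMonomial_mul_mem_rlexLowerSpan δ hy)
  | zero => simp
  | add _ _ _ _ hx hz => simpa only [add_mul] using add_mem hx hz
  | smul c _ _ hx => simpa only [smul_mul_assoc] using Submodule.smul_mem _ c hx

def HasLeadingTMonomial (I : Ideal (MvPolynomial (ℕ ⊕ ℕ) R)) (γ : ℕ →₀ ℕ)
    (x : MvPolynomial (ℕ ⊕ ℕ) R) : Prop :=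
  ∃ l : R, l ≠ 0 ∧ ∃ s ∈ rlexLowerSpan R γ, ∃ w ∈ I, x = l • tMonomial R γ + s + w

namespace HasLeadingTMonomial

variable {I : Ideal (MvPolynomial (ℕ ⊕ ℕ) R)}

theorem one [Nontrivial R] : HasLeadingTMonomial I 0 1 :=
  ⟨1, one_ne_zero, 0, zero_mem _, 0, zero_mem _, by simp⟩

theorem mul [NoZeroDivisors R] {a b : ℕ →₀ ℕ} {x y : MvPolynomial (ℕ ⊕ ℕ) R}
    (hx : HasLeadingTMonomial I a x) (hy : HasLeadingTMonomial I b y) :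
    HasLeadingTMonomial I (a + b) (x * y) := by
  obtain ⟨l₁, hl₁, s₁, hs₁, w₁, hw₁, rfl⟩ := hx
  obtain ⟨l₂, hl₂, s₂, hs₂, w₂, hw₂, rfl⟩ := hy
  refine ⟨l₁ * l₂, mul_ne_zero hl₁ hl₂,
    l₁ • (tMonomial R a * s₂) + l₂ • (s₁ * tMonomial R b) + s₁ * s₂, ?_,
    (l₁ • tMonomial R a + s₁ + w₁) * w₂ + w₁ * (l₂ • tMonomial R b + s₂), ?_, ?_⟩
  · have hs₁b : s₁ * tMonomial R b ∈ rlexLowerSpan R (a + b) := by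
      rw [mul_comm, add_comm]
      exact tMonomial_mul_mem_rlexLowerSpan b hs₁
    exact add_mem (add_mem (Submodule.smul_mem _ _ (tMonomial_mul_mem_rlexLowerSpan a hs₂))
      (Submodule.smul_mem _ _ hs₁b)) (mul_mem_rlexLowerSpan hs₁ hs₂)
  · exact add_mem (I.mul_mem_left _ hw₂) (I.mul_mem_right _ hw₁)
  · simp only [tMonomial_add, smul_eq_C_mul, map_mul]
    ring

theorem pow [Nontrivial R] [NoZeroDivisors R] {a : ℕ →₀ ℕ} {x : MvPolynomial (ℕ ⊕ ℕ) R}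
    (hx : HasLeadingTMonomial I a x) (n : ℕ) : HasLeadingTMonomial I (n • a) (x ^ n) := by
  induction n with
  | zero => simpa using one
  | succ n ih => simpa only [succ_nsmul, pow_succ] using ih.mul hx

end HasLeadingTMonomial

theorem hasLeadingTMonomial_map_monomial [Nontrivial R] [NoZeroDivisors R]
    {I : Ideal (MvPolynomial (ℕ ⊕ ℕ) R)} (η : MvPolynomial ℕ R →* MvPolynomial (ℕ ⊕ ℕ) R)
    (hX : ∀ m, HasLeadingTMonomial I (Finsupp.single m 1) (η (X m))) (γ : ℕ →₀ ℕ) :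
    HasLeadingTMonomial I γ (η (monomial γ 1)) := by
  induction γ using Finsupp.induction with
  | zero => simpa using HasLeadingTMonomial.one
  | single_add m n γ _ _ ih =>
    have hmn := (hX m).pow n
    rw [Finsupp.smul_single_one] at hmn
    rw [← mul_one (1 : R), ← monomial_mul, map_mul, ← X_pow_eq_monomial, map_pow]
    exact hmn.mul ih

end LeadingTMonomial

/-- If a ring homomorphism `η : ℤ_(p)[v₁,v₂,…] → ℤ_(p)[v₁,v₂,…][t₁,t₂,…]`
sends each `v_m` to `p·t_m` plus a linear combination of monomials `t^γ` of
the correct degree that are strictly `rlex`-smaller than the exponent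
sequence of `v_m`, plus a term of the ideal generated by the `v_i`, then for
every exponent sequence `γ`, `η(v^γ) = λ·t^γ + Σ_{γ' < γ} λ'_{γ'} t^{γ'} +
(terms in the ideal generated by the `v_i`)` with `λ ≠ 0`. -/
theorem eta_monomial_leading_term (p : ℕ) (hp : p.Prime)
    (η : MvPolynomial ℕ (Zploc p hp) →+* MvPolynomial (ℕ ⊕ ℕ) (Zploc p hp))
    (hη : ∀ m : ℕ, ∃ (lam : (ℕ →₀ ℕ) →₀ Zploc p hp)
        (w : MvPolynomial (ℕ ⊕ ℕ) (Zploc p hp)),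
      w ∈ videal p hp ∧
      (∀ γ ∈ lam.support, rlex γ (Finsupp.single m 1) ∧
        wdeg p γ = 2 * (p ^ (m + 1) - 1)) ∧
      η (MvPolynomial.X m) =
        (p : Zploc p hp) • tmon p hp (Finsupp.single m 1) +
          lam.sum (fun γ c => c • tmon p hp γ) + w) :
    ∀ γ : ℕ →₀ ℕ, ∃ (l : Zploc p hp) (lam' : (ℕ →₀ ℕ) →₀ Zploc p hp)
        (w : MvPolynomial (ℕ ⊕ ℕ) (Zploc p hp)),
      l ≠ 0 ∧ w ∈ videal p hp ∧
      (∀ γ' ∈ lam'.support, rlex γ' γ) ∧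
      η (MvPolynomial.monomial γ (1 : Zploc p hp)) =
        l • tmon p hp γ + lam'.sum (fun γ' c => c • tmon p hp γ') + w := by
  have hX : ∀ m, HasLeadingTMonomial (videal p hp) (Finsupp.single m 1) (η (X m)) := by
    intro m
    obtain ⟨lam, w, hw, hlam, hηm⟩ := hη m
    exact ⟨p, Nat.cast_ne_zero.mpr hp.ne_zero, _, Submodule.sum_mem _ fun δ hδ =>
      Submodule.smul_mem _ _ (tMonomial_mem_rlexLowerSpan (hlam δ hδ).1), w, hw, hηm⟩
  intro γ
  obtain ⟨l, hl, s, hs, w, hw, hηγ⟩ := hasLeadingTMonomial_map_monomial η.toMonoidHom hX γ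
  obtain ⟨lam', hsupp, rfl⟩ := (Finsupp.mem_span_image_iff_linearCombination _).mp hs
  exact ⟨l, lam', w, hl, hw, hsupp, hηγ⟩
end
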